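/- arXiv:2504.06077 — 8 statements merged into one kernel-verified Lean document; each statement's English description precedes it below -/
import Mathlib

section
/- Let V be a finite-dimensional real inner product space and let A, B, C be subspaces of V with B ⊆ A and C ⊆ A. Then (A ⊖ B) ⊖ (C ⊖ (B ∩ C)) = A ⊖ (B + C). -/
/-- Difference of subspaces: `W₁ ⊖ W₂ := W₁ ⊓ W₂ᗮ`. -/
noncomputable def Submodule.sdiffOrtho {V : Type*} [NormedAddCommGroup V] [InnerProductSpace ℝ V]
    (W₁ W₂ : Submodule ℝ V) : Submodule ℝ V :=
  W₁ ⊓ W₂ᗮ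

theorem Submodule.orthogonal_eq_orthogonal_inf_orthogonal_inf_orthogonal
    {𝕜 E : Type*} [RCLike 𝕜] [NormedAddCommGroup E] [InnerProductSpace 𝕜 E]
    {K C : Submodule 𝕜 E} [K.HasOrthogonalProjection] (hKC : K ≤ C) :
    Cᗮ = Kᗮ ⊓ (C ⊓ Kᗮ)ᗮ := by
  conv_lhs => rw [← sup_orthogonal_inf_of_hasOrthogonalProjection hKC]
  rw [inf_orthogonal, inf_comm C]

theorem sdiffOrtho_sdiffOrtho_eq_sdiffOrtho_sup_general
    {V : Type*} [NormedAddCommGroup V] [InnerProductSpace ℝ V] [FiniteDimensional ℝ V]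
    (A B C : Submodule ℝ V) :
    (A.sdiffOrtho B).sdiffOrtho (C.sdiffOrtho (B ⊓ C)) = A.sdiffOrtho (B ⊔ C) := by
  have hB_perp : Bᗮ ≤ (B ⊓ C)ᗮ := Submodule.orthogonal_le inf_le_left
  unfold Submodule.sdiffOrtho
  rw [← Submodule.inf_orthogonal,
    Submodule.orthogonal_eq_orthogonal_inf_orthogonal_inf_orthogonal (inf_le_right : B ⊓ C ≤ C),
    ← inf_assoc Bᗮ, inf_eq_left.mpr hB_perp, inf_assoc]

/-- For subspaces `B, C ⊆ A` of a finite-dimensional real inner product space,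
`(A ⊖ B) ⊖ (C ⊖ (B ∩ C)) = A ⊖ (B + C)`. -/
theorem sdiffOrtho_sdiffOrtho_eq_sdiffOrtho_sup
    {V : Type*} [NormedAddCommGroup V] [InnerProductSpace ℝ V] [FiniteDimensional ℝ V]
    (A B C : Submodule ℝ V) (hB : B ≤ A) (hC : C ≤ A) :
    (A.sdiffOrtho B).sdiffOrtho (C.sdiffOrtho (B ⊓ C)) = A.sdiffOrtho (B ⊔ C) :=
  sdiffOrtho_sdiffOrtho_eq_sdiffOrtho_sup_general A B C
end

section
/- Let V be a finite-dimensional real inner product space and let A, B, C be subspaces of V with B ⊆ A and C ⊆ A. Then, as an equality of integers, dim((A ⊖ B) ⊖ (C ⊖ (B ∩ C))) = (dim A − dim B) − (dim C − dim(B ∩ C)). -/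
/-!
Put `X := A ⊖ B` and `Y := C ⊖ (B ∩ C)`. Since `A = B ⊕ X` orthogonally, the part of `A`
orthogonal to `X` is `B`; hence a vector of `Y ⊆ A` orthogonal to `X` lies in `B ∩ C` and is
orthogonal to it, so `Y ⊖ X = 0`. The dimension count `dim (X ⊖ Y) + dim Y = dim X + dim (Y ⊖ X)`
then gives `dim (X ⊖ Y) = dim X - dim Y`, and `dim X = dim A - dim B`, `dim Y = dim C - dim (B ∩ C)`.
-/

open Module

namespace Submodule

variable {V : Type*} [NormedAddCommGroup V] [InnerProductSpace ℝ V]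

theorem finrank_add_finrank_sdiffOrtho_of_le {U W : Submodule ℝ V} [FiniteDimensional ℝ W]
    (h : U ≤ W) : finrank ℝ U + finrank ℝ (W.sdiffOrtho U) = finrank ℝ W := by
  rw [sdiffOrtho, inf_comm]
  exact finrank_add_inf_finrank_orthogonal h

theorem finrank_sdiffOrtho_add_finrank [FiniteDimensional ℝ V] (W U : Submodule ℝ V) :
    finrank ℝ (W.sdiffOrtho U) + finrank ℝ U = finrank ℝ W + finrank ℝ (U.sdiffOrtho W) := by
  have hsup := finrank_sup_add_finrank_inf_eq W Uᗮ
  have hU := finrank_add_finrank_orthogonal U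
  have hWU := finrank_add_finrank_orthogonal (W ⊔ Uᗮ)
  have hcompl : (W ⊔ Uᗮ)ᗮ = U ⊓ Wᗮ := by
    rw [← inf_orthogonal, orthogonal_orthogonal, inf_comm]
  rw [sdiffOrtho, sdiffOrtho, ← hcompl]
  omega

theorem sup_sdiffOrtho_of_le {A B : Submodule ℝ V} [B.HasOrthogonalProjection] (h : B ≤ A) :
    B ⊔ A.sdiffOrtho B = A := by
  rw [sdiffOrtho, inf_comm, sup_orthogonal_inf_of_hasOrthogonalProjection h]

theorem inf_orthogonal_sdiffOrtho_of_le {A B : Submodule ℝ V} [B.HasOrthogonalProjection]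
    (h : B ≤ A) : A ⊓ (A.sdiffOrtho B)ᗮ = B := by
  have hB : B ≤ (A.sdiffOrtho B)ᗮ :=
    (le_orthogonal_orthogonal B).trans (orthogonal_le inf_le_right)
  calc A ⊓ (A.sdiffOrtho B)ᗮ = (B ⊔ A.sdiffOrtho B) ⊓ (A.sdiffOrtho B)ᗮ := by
        rw [sup_sdiffOrtho_of_le h]
    _ = B ⊔ A.sdiffOrtho B ⊓ (A.sdiffOrtho B)ᗮ := sup_inf_assoc_of_le _ hB
    _ = B := by rw [inf_orthogonal_eq_bot, sup_bot_eq]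

theorem sdiffOrtho_sdiffOrtho_inf_sdiffOrtho_eq_bot {A B C : Submodule ℝ V}
    [B.HasOrthogonalProjection] (hB : B ≤ A) (hC : C ≤ A) :
    (C.sdiffOrtho (B ⊓ C)).sdiffOrtho (A.sdiffOrtho B) = ⊥ := by
  have hCB : C ⊓ (A.sdiffOrtho B)ᗮ = B ⊓ C := by
    calc C ⊓ (A.sdiffOrtho B)ᗮ = C ⊓ (A ⊓ (A.sdiffOrtho B)ᗮ) := by
          rw [← inf_assoc, inf_eq_left.mpr hC]
      _ = B ⊓ C := by rw [inf_orthogonal_sdiffOrtho_of_le hB, inf_comm]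
  rw [sdiffOrtho, sdiffOrtho, inf_right_comm, hCB, inf_orthogonal_eq_bot]

end Submodule

open Submodule in
/-- For subspaces `B, C ⊆ A` of a finite-dimensional real inner product space,
`dim((A ⊖ B) ⊖ (C ⊖ (B ∩ C))) = (dim A − dim B) − (dim C − dim (B ∩ C))` as integers. -/
theorem finrank_sdiffOrtho_sdiffOrtho
    {V : Type*} [NormedAddCommGroup V] [InnerProductSpace ℝ V] [FiniteDimensional ℝ V]
    (A B C : Submodule ℝ V) (hB : B ≤ A) (hC : C ≤ A) :
    (Module.finrank ℝ ↥((A.sdiffOrtho B).sdiffOrtho (C.sdiffOrtho (B ⊓ C))) : ℤ) =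
      ((Module.finrank ℝ ↥A : ℤ) - (Module.finrank ℝ ↥B : ℤ)) -
        ((Module.finrank ℝ ↥C : ℤ) - (Module.finrank ℝ ↥(B ⊓ C) : ℤ)) := by
  have hX := finrank_add_finrank_sdiffOrtho_of_le hB
  have hY := finrank_add_finrank_sdiffOrtho_of_le (inf_le_right : B ⊓ C ≤ C)
  have hXY := finrank_sdiffOrtho_add_finrank (A.sdiffOrtho B) (C.sdiffOrtho (B ⊓ C))
  rw [sdiffOrtho_sdiffOrtho_inf_sdiffOrtho_eq_bot hB hC, finrank_bot] at hXY
  omega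
end

section
/- Let V be a finite-dimensional real inner product space, let R and S be finite partially ordered sets, let M₁ be a function from R to subspaces of V such that {M₁(r)}_{r∈R} is a transverse family, and let M₂ be a function from S to subspaces of V such that {M₂(s)}_{s∈S} is a transverse family. Let h : R → S be an order-preserving map such that for every s ∈ S, ∑_{s' ≤ s} (h_♯M₁)(s') = ∑_{s' ≤ s} M₂(s') (equality of subspaces of V). Then for every s ∈ S, dim(M₂(s)) = ∑_{r ∈ h⁻¹(s)} dim(M₁(r)). -/
/-!
Transversality is inherited by subfamilies, so for each `s` both sides of the hypothesis
have dimension equal to the corresponding sum of dimensions: the downward partial sums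
`∑_{s' ≤ s}` of `dim M₂(s')` and of `∑_{r ∈ h⁻¹(s')} dim M₁(r)` agree. Downward partial
sums over a finite poset determine the summands (Möbius inversion), which is the claim.
-/

open Module Finset

namespace Submodule

variable {K V ι : Type*} [DivisionRing K] [AddCommGroup V] [Module K V] [FiniteDimensional K V]

def IsTransverse [Fintype ι] (M : ι → Submodule K V) : Prop :=
  finrank K ↥(∑ i, M i) = ∑ i, finrank K ↥(M i)

theorem finrank_finset_sum_le (M : ι → Submodule K V) (T : Finset ι) :
    finrank K ↥(∑ i ∈ T, M i) ≤ ∑ i ∈ T, finrank K ↥(M i) :=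
  Finset.sum_hom_rel (r := fun (W : Submodule K V) n => finrank K W ≤ n) (finrank_bot K V).le
    fun i _ _ hle => (finrank_add_le_finrank_add_finrank (M i) _).trans (by gcongr)

theorem IsTransverse.finrank_finset_sum [Fintype ι] {M : ι → Submodule K V}
    (hM : IsTransverse M) (T : Finset ι) :
    finrank K ↥(∑ i ∈ T, M i) = ∑ i ∈ T, finrank K ↥(M i) := by
  classical
  have hT := finrank_finset_sum_le M T
  have hTc := finrank_finset_sum_le M Tᶜ
  have hsplit : finrank K ↥(∑ i, M i) ≤
      finrank K ↥(∑ i ∈ T, M i) + finrank K ↥(∑ i ∈ Tᶜ, M i) := by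
    rw [← sum_add_sum_compl T M]
    exact finrank_add_le_finrank_add_finrank _ _
  have hdims := sum_add_sum_compl T fun i => finrank K ↥(M i)
  unfold IsTransverse at hM
  omega

end Submodule

/-- The uniqueness half of Möbius inversion. -/
theorem eq_of_forall_sum_filter_le_eq {α β : Type*} [PartialOrder α] [Fintype α]
    [DecidableRel ((· ≤ ·) : α → α → Prop)] [AddCancelCommMonoid β] {f g : α → β}
    (hfg : ∀ a, ∑ b ∈ univ.filter (· ≤ a), f b = ∑ b ∈ univ.filter (· ≤ a), g b) : f = g := by
  classical
  funext a
  induction a using WellFoundedLT.induction with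
  | _ a ih =>
    have ha : a ∈ univ.filter (· ≤ a) := by simp
    have hbelow : ∑ b ∈ (univ.filter (· ≤ a)).erase a, f b =
        ∑ b ∈ (univ.filter (· ≤ a)).erase a, g b :=
      sum_congr rfl fun b hb =>
        ih b ((mem_filter.1 (mem_of_mem_erase hb)).2.lt_of_ne (ne_of_mem_erase hb))
    have hsum := hfg a
    rw [← add_sum_erase _ _ ha, ← add_sum_erase _ _ ha, hbelow] at hsum
    exact add_right_cancel hsum

theorem push_mobiusEquiv_implies_push_dim_general
    {V : Type*} [NormedAddCommGroup V] [InnerProductSpace ℝ V] [FiniteDimensional ℝ V]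
    {R S : Type*} [PartialOrder R] [Fintype R] [PartialOrder S] [Fintype S]
    [DecidableEq S] [DecidableRel ((· ≤ ·) : S → S → Prop)]
    (M₁ : R → Submodule ℝ V) (M₂ : S → Submodule ℝ V)
    (h₁ : Module.finrank ℝ ↥(∑ r, M₁ r) = ∑ r, Module.finrank ℝ ↥(M₁ r))
    (h₂ : Module.finrank ℝ ↥(∑ s, M₂ s) = ∑ s, Module.finrank ℝ ↥(M₂ s))
    (h : R → S)
    (heq : ∀ s : S,
      ∑ s' ∈ Finset.univ.filter (· ≤ s), ∑ r ∈ Finset.univ.filter (fun r => h r = s'), M₁ r =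
        ∑ s' ∈ Finset.univ.filter (· ≤ s), M₂ s') :
    ∀ s : S, Module.finrank ℝ ↥(M₂ s) =
      ∑ r ∈ Finset.univ.filter (fun r => h r = s), Module.finrank ℝ ↥(M₁ r) := by
  have hT₁ : Submodule.IsTransverse M₁ := h₁
  have hT₂ : Submodule.IsTransverse M₂ := h₂
  refine congrFun (eq_of_forall_sum_filter_le_eq fun s => ?_)
  rw [← hT₂.finrank_finset_sum, ← heq s, sum_fiberwise_eq_sum_filter, hT₁.finrank_finset_sum,
    sum_fiberwise_eq_sum_filter]

/-- Let `M₁` and `M₂` be functions from finite posets `R`, `S` to subspaces of a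
finite-dimensional real inner product space, each forming a transverse family, and let
`h : R → S` be order-preserving such that the pushforward `h_♯M₁` is Möbius equivalent to
`M₂` (their downward partial sums of subspaces agree). Then
`dim(M₂(s)) = ∑_{r ∈ h⁻¹(s)} dim(M₁(r))` for every `s ∈ S`. -/
theorem push_mobiusEquiv_implies_push_dim
    {V : Type*} [NormedAddCommGroup V] [InnerProductSpace ℝ V] [FiniteDimensional ℝ V]
    {R S : Type*} [PartialOrder R] [Fintype R] [PartialOrder S] [Fintype S]
    [DecidableEq S] [DecidableRel ((· ≤ ·) : S → S → Prop)]
    (M₁ : R → Submodule ℝ V) (M₂ : S → Submodule ℝ V)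
    (h₁ : Module.finrank ℝ ↥(∑ r, M₁ r) = ∑ r, Module.finrank ℝ ↥(M₁ r))
    (h₂ : Module.finrank ℝ ↥(∑ s, M₂ s) = ∑ s, Module.finrank ℝ ↥(M₂ s))
    (h : R → S) (hmono : Monotone h)
    (heq : ∀ s : S,
      ∑ s' ∈ Finset.univ.filter (· ≤ s), ∑ r ∈ Finset.univ.filter (fun r => h r = s'), M₁ r =
        ∑ s' ∈ Finset.univ.filter (· ≤ s), M₂ s') :
    ∀ s : S, Module.finrank ℝ ↥(M₂ s) =
      ∑ r ∈ Finset.univ.filter (fun r => h r = s), Module.finrank ℝ ↥(M₁ r) :=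
  push_mobiusEquiv_implies_push_dim_general M₁ M₂ h₁ h₂ h heq
end

section
/- Let P and Q be finite partially ordered sets, let (f_⋄, f^⋄) be a Galois connection from P to Q, let M be a commutative additive monoid, and let m, m' : P → M be functions such that m' is a monoidal Möbius inverse of m, i.e., ∑_{p' ≤ p} m'(p') = m(p) for all p ∈ P. Then the pushforward of m' along f_⋄ is a monoidal Möbius inverse of the pullback of m along f^⋄; explicitly, for every q ∈ Q, ∑_{q' ≤ q} ∑_{p ∈ f_⋄⁻¹(q')} m'(p) = m(f^⋄(q)). -/
open Finset

theorem GaloisConnection.sum_fiberwise_le_eq_sum_le_u {P Q M : Type*} [Preorder P] [Preorder Q]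
    [Fintype P] [Fintype Q] [DecidableRel ((· ≤ ·) : P → P → Prop)]
    [DecidableRel ((· ≤ ·) : Q → Q → Prop)] [DecidableEq Q] [AddCommMonoid M] {l : P → Q} {u : Q → P}
    (gc : GaloisConnection l u) (f : P → M) (q : Q) :
    ∑ q' ∈ univ.filter (· ≤ q), ∑ p ∈ univ.filter (fun p => l p = q'), f p =
      ∑ p ∈ univ.filter (· ≤ u q), f p := by
  rw [sum_fiberwise_eq_sum_filter]
  congr 1
  ext p
  simp [gc p q]

/-- Monoidal Rota's Galois Connection Theorem for a Galois connection `(l, u)` between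
finite posets `P` and `Q`: if `m' : P → M` is a monoidal Möbius inverse of `m : P → M`
(`∑_{p' ≤ p} m'(p') = m(p)` for all `p`), then the pushforward of `m'` along `l` is a
monoidal Möbius inverse of the pullback of `m` along `u`:
`∑_{q' ≤ q} ∑_{p ∈ l⁻¹(q')} m'(p) = m(u(q))` for every `q ∈ Q`. -/
theorem monoidal_rgct
    {P Q : Type*} [PartialOrder P] [Fintype P] [PartialOrder Q] [Fintype Q]
    [DecidableRel ((· ≤ ·) : P → P → Prop)] [DecidableRel ((· ≤ ·) : Q → Q → Prop)]
    [DecidableEq Q]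
    {M : Type*} [AddCommMonoid M]
    (l : P → Q) (u : Q → P) (hgc : GaloisConnection l u)
    (m m' : P → M)
    (hinv : ∀ p : P, ∑ p' ∈ Finset.univ.filter (· ≤ p), m' p' = m p) :
    ∀ q : Q,
      ∑ q' ∈ Finset.univ.filter (· ≤ q), ∑ p ∈ Finset.univ.filter (fun p => l p = q'), m' p =
        m (u q) := by
  intro q
  rw [hgc.sum_fiberwise_le_eq_sum_le_u, hinv]
end

section
/- Let R be a finite partially ordered set, V a finite-dimensional real inner product space, and F an order-preserving map from R to the subspaces of V (ordered by inclusion). Define the Orthogonal Inverse O(F)(r) := F(r) ∩ (∑_{r' < r} F(r'))^⊥ for r ∈ R, where the empty sum is the zero subspace. Then the Orthogonal Inverse is a monoidal Möbius inverse of F: for every r ∈ R, ∑_{r' ≤ r} O(F)(r') = F(r). -/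
/-!
Induct on `r` over the well-founded order of `R`. Writing `S = ∑_{r' < r} F r'`, the induction
hypothesis gives `∑_{r' < r} O(F)(r') = S`: each `F r'` with `r' < r` is already a sum of
`O(F)`-values below `r`, and conversely `O(F) ≤ F`. Monotonicity gives `S ≤ F r`, so the claim
`S ⊔ (F r ⊓ Sᗮ) = F r` is the orthogonal decomposition of `F r` along the complete subspace `S`.
-/

open Finset

namespace Finset

variable {R M : Type*} [PartialOrder R] [Fintype R]
  [DecidableRel ((· ≤ ·) : R → R → Prop)] [DecidableRel ((· < ·) : R → R → Prop)]

theorem sum_filter_le_eq_sum_filter_lt_add [AddCommMonoid M] (f : R → M) (r : R) :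
    ∑ r' ∈ univ.filter (· ≤ r), f r' = ∑ r' ∈ univ.filter (· < r), f r' + f r := by
  classical
  have hsplit : univ.filter (· ≤ r) = insert r (univ.filter (· < r)) := by
    ext x
    simp [le_iff_lt_or_eq, or_comm]
  rw [hsplit, sum_insert (by simp), add_comm]

end Finset

namespace Submodule

variable {K M : Type*} [Semiring K] [AddCommMonoid M] [Module K M]

theorem finsetSum_le {ι : Type*} {s : Finset ι} {p : ι → Submodule K M} {q : Submodule K M}
    (h : ∀ i ∈ s, p i ≤ q) : ∑ i ∈ s, p i ≤ q :=
  Finset.sum_induction p (· ≤ q) (fun _ _ => sup_le) bot_le h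

variable {R : Type*} [PartialOrder R] [Fintype R] [DecidableRel ((· < ·) : R → R → Prop)]

theorem sum_filter_lt_le_of_monotone {F : R → Submodule K M} (hF : Monotone F) (r : R) :
    ∑ r' ∈ univ.filter (· < r), F r' ≤ F r :=
  finsetSum_le fun _ hr' => hF (mem_filter.1 hr').2.le

theorem sum_filter_lt_eq_of_le_of_sum_filter_le_eq [DecidableRel ((· ≤ ·) : R → R → Prop)]
    {F O : R → Submodule K M} (hOF : O ≤ F) {r : R} (hsum : ∀ r' < r, ∑ r'' ∈ univ.filter (· ≤ r'), O r'' = F r') :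
    ∑ r' ∈ univ.filter (· < r), O r' = ∑ r' ∈ univ.filter (· < r), F r' := by
  refine le_antisymm (sum_le_sum fun r' _ => hOF r') (finsetSum_le fun r' hr' => ?_)
  have hr' : r' < r := (mem_filter.1 hr').2
  rw [← hsum r' hr']
  exact sum_le_sum_of_subset fun r'' hr'' => by
    simpa using (mem_filter.1 hr'').2.trans_lt hr'

end Submodule

/-- For an order-preserving map `F` from a finite poset `R` to the subspaces of a
finite-dimensional real inner product space `V`, the Orthogonal Inverse
`O(F)(r) := F(r) ∩ (∑_{r' < r} F(r'))^⊥` is a monoidal Möbius inverse of `F`: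
`∑_{r' ≤ r} O(F)(r') = F(r)` for every `r ∈ R`. -/
theorem orthogonalInverse_monoidal_mobius_inverse
    {V : Type*} [NormedAddCommGroup V] [InnerProductSpace ℝ V] [FiniteDimensional ℝ V]
    {R : Type*} [PartialOrder R] [Fintype R]
    [DecidableRel ((· ≤ ·) : R → R → Prop)] [DecidableRel ((· < ·) : R → R → Prop)]
    (F : R → Submodule ℝ V) (hF : Monotone F) :
    ∀ r : R,
      ∑ r' ∈ Finset.univ.filter (· ≤ r),
          (F r' ⊓ (∑ r'' ∈ Finset.univ.filter (· < r'), F r'')ᗮ) = F r := by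
  intro r
  induction r using WellFoundedLT.induction with
  | _ r ih =>
    rw [sum_filter_le_eq_sum_filter_lt_add,
      Submodule.sum_filter_lt_eq_of_le_of_sum_filter_le_eq (fun _ => inf_le_left) ih,
      Submodule.add_eq_sup, inf_comm]
    exact Submodule.sup_orthogonal_inf_of_hasOrthogonalProjection
      (Submodule.sum_filter_lt_le_of_monotone hF r)
end

section
/- Let n ≥ 1, let V be a finite-dimensional real inner product space, and let F : Seg_n → {subspaces of V} be intersection-monotone. Then the ×-Linear Orthogonal Inverse of F agrees with the Orthogonal Inverse of F: for every segment s ∈ Seg_n, O_×(F)(s) = F(s) ∩ (∑_{s' < s} F(s'))^⊥, where the sum ranges over all s' ∈ Seg_n with s' < s in the product order and the empty sum is the zero subspace. -/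
/-- Difference of subspaces: `W₁ ⊖ W₂ := W₁ ⊓ W₂ᗮ`. -/
noncomputable def sdiffOrtho {V : Type*} [NormedAddCommGroup V] [InnerProductSpace ℝ V]
    (W₁ W₂ : Submodule ℝ V) : Submodule ℝ V :=
  W₁ ⊓ W₂ᗮ

/-- The set of segments of the linear poset `{1 < ⋯ < n}`, as a `Finset` of pairs
`(i, j)` with `1 ≤ i ≤ j ≤ n + 1` (the value `n + 1` encoding `∞`), carrying the
product order of `ℕ × ℕ`. -/
def SegFinset (n : ℕ) : Finset (ℕ × ℕ) :=
  (Finset.Icc 1 (n + 1) ×ˢ Finset.Icc 1 (n + 1)).filter fun p => p.1 ≤ p.2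

/-- The ×-Linear Orthogonal Inverse of `F`, where `F` is assumed to incorporate the
convention `F 0 j = ⊥`. -/
noncomputable def Ox {V : Type*} [NormedAddCommGroup V] [InnerProductSpace ℝ V]
    (F : ℕ → ℕ → Submodule ℝ V) (i j : ℕ) : Submodule ℝ V :=
  if i = j then sdiffOrtho (F i i) (F (i - 1) i)
  else
    sdiffOrtho (sdiffOrtho (F i j) (F i (j - 1)))
      (sdiffOrtho (F (i - 1) j) (F (i - 1) (j - 1)))

/-!
Both sides have the form `F(s) ⊓ (·)ᗮ`. The strict predecessors of `s = (i, j)` span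
`F(i, j-1) + F(i-1, j)` (only `F(i-1, i)` on the diagonal): by monotonicity every strict
predecessor lies below one of these two. The ×-formula then follows from the orthogonal
splitting `F(i-1, j) = F(i-1, j-1) ⊕ (F(i-1, j) ⊖ F(i-1, j-1))`, whose first summand already
lies in `F(i, j-1)`.
-/

theorem Submodule.finset_sum_eq_sup {R M ι : Type*} [Semiring R] [AddCommMonoid M] [Module R M]
    (s : Finset ι) (f : ι → Submodule R M) : ∑ i ∈ s, f i = s.sup f := by
  induction s using Finset.cons_induction with
  | empty => rfl
  | cons _ _ _ ih => rw [Finset.sum_cons, Finset.sup_cons, ih, Submodule.add_eq_sup]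

theorem sdiffOrtho_sdiffOrtho {V : Type*} [NormedAddCommGroup V] [InnerProductSpace ℝ V]
    {A A' B B' : Submodule ℝ V} [B'.HasOrthogonalProjection]
    (hA' : B' ≤ A') (hB : B' ≤ B) :
    sdiffOrtho (sdiffOrtho A A') (sdiffOrtho B B') = A ⊓ (A' ⊔ B)ᗮ := by
  have hsplit : A' ⊔ B = A' ⊔ sdiffOrtho B B' :=
    calc A' ⊔ B = A' ⊔ (B' ⊔ B'ᗮ ⊓ B) := by
          rw [Submodule.sup_orthogonal_inf_of_hasOrthogonalProjection hB]
      _ = A' ⊔ sdiffOrtho B B' := by rw [← sup_assoc, sup_eq_left.mpr hA', sdiffOrtho, inf_comm]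
  rw [hsplit, ← Submodule.inf_orthogonal, sdiffOrtho, sdiffOrtho, inf_assoc]

def strictLowerSegs (n i j : ℕ) : Finset (ℕ × ℕ) :=
  (SegFinset n).filter fun p => p.1 ≤ i ∧ p.2 ≤ j ∧ p ≠ (i, j)

theorem mem_strictLowerSegs {n i j k l : ℕ} :
    (k, l) ∈ strictLowerSegs n i j ↔
      1 ≤ k ∧ k ≤ l ∧ l ≤ n + 1 ∧ k ≤ i ∧ l ≤ j ∧ ¬(k = i ∧ l = j) := by
  simp only [strictLowerSegs, SegFinset, Finset.mem_filter, Finset.mem_product, Finset.mem_Icc,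
    ne_eq, Prod.mk.injEq]
  omega

section Monotone

variable {V : Type*} [NormedAddCommGroup V] [InnerProductSpace ℝ V]
  {n : ℕ} {F : ℕ → ℕ → Submodule ℝ V}

theorem le_of_le_of_forall_zero_eq_bot (hF0 : ∀ j, F 0 j = ⊥)
    (hmono : ∀ i j k l : ℕ, 1 ≤ i → i ≤ j → j ≤ n + 1 → 1 ≤ k → k ≤ l → l ≤ n + 1 →
      i ≤ k → j ≤ l → F i j ≤ F k l)
    {i j k l : ℕ} (hij : i ≤ j) (hkl : k ≤ l) (hl : l ≤ n + 1) (hik : i ≤ k) (hjl : j ≤ l) :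
    F i j ≤ F k l := by
  rcases Nat.eq_zero_or_pos i with rfl | hi
  · rw [hF0]
    exact bot_le
  · exact hmono i j k l hi hij (hjl.trans hl) (hi.trans_le hik) hkl hl hik hjl

theorem le_sum_strictLowerSegs (hF0 : ∀ j, F 0 j = ⊥) {i j k l : ℕ} (hkl : k ≤ l)
    (hl : l ≤ n + 1) (hki : k ≤ i) (hlj : l ≤ j) (hne : ¬(k = i ∧ l = j)) :
    F k l ≤ ∑ p ∈ strictLowerSegs n i j, F p.1 p.2 := by
  rcases Nat.eq_zero_or_pos k with rfl | hk
  · rw [hF0]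
    exact bot_le
  · exact Finset.single_le_sum_of_canonicallyOrdered (f := fun p => F p.1 p.2)
      (mem_strictLowerSegs.mpr ⟨hk, hkl, hl, hki, hlj, hne⟩)

theorem sum_strictLowerSegs_le {i j : ℕ} {X : Submodule ℝ V}
    (h : ∀ k l, 1 ≤ k → k ≤ l → l ≤ n + 1 → k ≤ i → l ≤ j → ¬(k = i ∧ l = j) → F k l ≤ X) :
    ∑ p ∈ strictLowerSegs n i j, F p.1 p.2 ≤ X := by
  rw [Submodule.finset_sum_eq_sup]
  refine Finset.sup_le fun ⟨k, l⟩ hp => ?_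
  obtain ⟨hk, hkl, hl, hki, hlj, hne⟩ := mem_strictLowerSegs.mp hp
  exact h k l hk hkl hl hki hlj hne

theorem sum_strictLowerSegs_self (hF0 : ∀ j, F 0 j = ⊥)
    (hle : ∀ {i j k l : ℕ}, i ≤ j → k ≤ l → l ≤ n + 1 → i ≤ k → j ≤ l → F i j ≤ F k l)
    {i : ℕ} (hi : 1 ≤ i) (hin : i ≤ n + 1) :
    ∑ p ∈ strictLowerSegs n i i, F p.1 p.2 = F (i - 1) i :=
  le_antisymm
    (sum_strictLowerSegs_le fun k l _ hkl _ hki hli hne =>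
      hle hkl (by omega) hin (by omega) hli)
    (le_sum_strictLowerSegs hF0 (by omega) hin (by omega) le_rfl (by omega))

theorem sum_strictLowerSegs_of_lt (hF0 : ∀ j, F 0 j = ⊥)
    (hle : ∀ {i j k l : ℕ}, i ≤ j → k ≤ l → l ≤ n + 1 → i ≤ k → j ≤ l → F i j ≤ F k l)
    {i j : ℕ} (hi : 1 ≤ i) (hij : i < j) (hjn : j ≤ n + 1) :
    ∑ p ∈ strictLowerSegs n i j, F p.1 p.2 = F i (j - 1) ⊔ F (i - 1) j := by
  refine le_antisymm (sum_strictLowerSegs_le fun k l _ hkl _ hki hlj hne => ?_) (sup_le ?_ ?_)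
  · rcases hlj.lt_or_eq with hlj | rfl
    · exact (hle hkl (by omega) (by omega) hki (by omega)).trans le_sup_left
    · exact (hle hkl (by omega) hjn (by omega) le_rfl).trans le_sup_right
  · exact le_sum_strictLowerSegs hF0 (by omega) (by omega) le_rfl (by omega) (by omega)
  · exact le_sum_strictLowerSegs hF0 (by omega) hjn (by omega) le_rfl (by omega)

end Monotone

theorem timesOrthogonalInverse_eq_orthogonalInverse_general
    {V : Type*} [NormedAddCommGroup V] [InnerProductSpace ℝ V] [FiniteDimensional ℝ V]
    (n : ℕ) (F : ℕ → ℕ → Submodule ℝ V)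
    (hF0 : ∀ j : ℕ, F 0 j = ⊥)
    (hmono : ∀ i j k l : ℕ, 1 ≤ i → i ≤ j → j ≤ n + 1 → 1 ≤ k → k ≤ l → l ≤ n + 1 →
      i ≤ k → j ≤ l → F i j ≤ F k l) :
    ∀ i j : ℕ, 1 ≤ i → i ≤ j → j ≤ n + 1 →
      Ox F i j =
        F i j ⊓
          (∑ p ∈ (SegFinset n).filter (fun p => p.1 ≤ i ∧ p.2 ≤ j ∧ p ≠ (i, j)),
            F p.1 p.2)ᗮ := by
  intro i j hi hij hjn
  have hle := @le_of_le_of_forall_zero_eq_bot _ _ _ n F hF0 hmono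
  rcases hij.eq_or_lt with rfl | hlt
  · rw [Ox, if_pos rfl, sdiffOrtho, ← sum_strictLowerSegs_self hF0 hle hi hjn]
    rfl
  · rw [Ox, if_neg hlt.ne, sdiffOrtho_sdiffOrtho (hle (by omega) (by omega) (by omega) (by omega)
      le_rfl) (hle (by omega) (by omega) hjn le_rfl (by omega)),
      ← sum_strictLowerSegs_of_lt hF0 hle hi hlt hjn]
    rfl

/-- For an intersection-monotone function `F` on the segments of `{1 < ⋯ < n}`, the
×-Linear Orthogonal Inverse agrees with the general Orthogonal Inverse:
`O_×(F)(s) = F(s) ∩ (∑_{s' < s} F(s'))^⊥` for every segment `s`. -/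
theorem timesOrthogonalInverse_eq_orthogonalInverse
    {V : Type*} [NormedAddCommGroup V] [InnerProductSpace ℝ V] [FiniteDimensional ℝ V]
    (n : ℕ) (hn : 1 ≤ n) (F : ℕ → ℕ → Submodule ℝ V)
    (hF0 : ∀ j : ℕ, F 0 j = ⊥)
    (hmono : ∀ i j k l : ℕ, 1 ≤ i → i ≤ j → j ≤ n + 1 → 1 ≤ k → k ≤ l → l ≤ n + 1 →
      i ≤ k → j ≤ l → F i j ≤ F k l)
    (hint : ∀ i j : ℕ, 1 ≤ i → i < j → j ≤ n → F (i + 1) j ⊓ F i (j + 1) = F i j) :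
    ∀ i j : ℕ, 1 ≤ i → i ≤ j → j ≤ n + 1 →
      Ox F i j =
        F i j ⊓
          (∑ p ∈ (SegFinset n).filter (fun p => p.1 ≤ i ∧ p.2 ≤ j ∧ p ≠ (i, j)),
            F p.1 p.2)ᗮ :=
  timesOrthogonalInverse_eq_orthogonalInverse_general n F hF0 hmono
end

section
/- Let n ≥ 1, let V be a finite-dimensional real inner product space, and let F : Seg_n → {subspaces of V} be intersection-monotone. Then the ×-Linear Orthogonal Inverse of F is a monoidal Möbius inverse of F: for every segment s ∈ Seg_n, ∑_{s' ≤ s} O_×(F)(s') = F(s), where the sum of subspaces ranges over all s' ∈ Seg_n with s' ≤ s in the product order. -/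
/-!
For `i < j` put `K = F(i, j-1) ⊔ F(i-1, j)` (on the diagonal, `K = F(i-1, i)`). Monotonicity gives
`K ≤ F(i, j)`, hence `F(i, j) = K ⊔ (F(i, j) ⊓ Kᗮ)`, and `F(i, j) ⊓ Kᗮ ≤ O_×(F)(i, j)` because
`F(i-1, j)ᗮ ≤ (F(i-1, j) ⊖ F(i-1, j-1))ᗮ`. Induction on `i + j` then puts `F(i, j)` inside the sum;
the reverse inclusion is `O_×(F)(s') ≤ F(s') ≤ F(s)`.
-/

def SegMonotone {V : Type*} [NormedAddCommGroup V] [InnerProductSpace ℝ V]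
    (n : ℕ) (F : ℕ → ℕ → Submodule ℝ V) : Prop :=
  ∀ i j k l : ℕ, 1 ≤ i → i ≤ j → j ≤ n + 1 → 1 ≤ k → k ≤ l → l ≤ n + 1 →
    i ≤ k → j ≤ l → F i j ≤ F k l

noncomputable def sumOxBelow {V : Type*} [NormedAddCommGroup V] [InnerProductSpace ℝ V]
    (n : ℕ) (F : ℕ → ℕ → Submodule ℝ V) (i j : ℕ) : Submodule ℝ V :=
  ∑ p ∈ (SegFinset n).filter (fun p => p.1 ≤ i ∧ p.2 ≤ j), Ox F p.1 p.2

theorem Submodule.finset_sum_le {R M ι : Type*} [Semiring R] [AddCommMonoid M] [Module R M]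
    {s : Finset ι} {f : ι → Submodule R M} {K : Submodule R M} (h : ∀ a ∈ s, f a ≤ K) :
    ∑ a ∈ s, f a ≤ K :=
  Finset.sum_induction f (· ≤ K) (fun _ _ ha hb => sup_le ha hb) bot_le h

section

variable {V : Type*} [NormedAddCommGroup V] [InnerProductSpace ℝ V]
  {n : ℕ} {F : ℕ → ℕ → Submodule ℝ V} {i j : ℕ}

theorem mem_SegFinset {p : ℕ × ℕ} : p ∈ SegFinset n ↔ 1 ≤ p.1 ∧ p.1 ≤ p.2 ∧ p.2 ≤ n + 1 := by
  simp only [SegFinset, Finset.mem_filter, Finset.mem_product, Finset.mem_Icc]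
  omega

theorem SegMonotone.pred_left_le (hmono : SegMonotone n F) (hF0 : ∀ j, F 0 j = ⊥)
    (hi : 1 ≤ i) (hij : i ≤ j) (hj : j ≤ n + 1) : F (i - 1) j ≤ F i j := by
  rcases hi.eq_or_lt with rfl | hi
  · simp [hF0]
  · exact hmono _ _ _ _ (by omega) (by omega) hj hi.le hij hj (by omega) le_rfl

theorem SegMonotone.pred_right_le (hmono : SegMonotone n F)
    (hi : 1 ≤ i) (hij : i < j) (hj : j ≤ n + 1) : F i (j - 1) ≤ F i j :=
  hmono _ _ _ _ hi (by omega) (by omega) hi hij.le hj le_rfl (by omega)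

theorem Ox_le (F : ℕ → ℕ → Submodule ℝ V) (i j : ℕ) : Ox F i j ≤ F i j := by
  unfold Ox sdiffOrtho
  split_ifs with h
  · exact h ▸ inf_le_left
  · exact inf_le_left.trans inf_le_left

theorem orthogonal_inf_le_Ox_self : (F (i - 1) i)ᗮ ⊓ F i i ≤ Ox F i i := by
  rw [Ox, if_pos rfl, sdiffOrtho, inf_comm]

theorem orthogonal_inf_le_Ox_of_ne (h : i ≠ j) :
    (F i (j - 1) ⊔ F (i - 1) j)ᗮ ⊓ F i j ≤ Ox F i j := by
  rw [Ox, if_neg h, sdiffOrtho, sdiffOrtho, sdiffOrtho, ← Submodule.inf_orthogonal]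
  refine le_inf (le_inf inf_le_right (inf_le_left.trans inf_le_left)) ?_
  exact inf_le_left.trans (inf_le_right.trans (Submodule.orthogonal_le inf_le_left))

theorem sumOxBelow_mono {i' j' : ℕ} (hi : i' ≤ i) (hj : j' ≤ j) :
    sumOxBelow n F i' j' ≤ sumOxBelow n F i j :=
  Finset.sum_le_sum_of_subset <| Finset.monotone_filter_right _
    fun _ _ hp => ⟨hp.1.trans hi, hp.2.trans hj⟩

theorem Ox_le_sumOxBelow (hi : 1 ≤ i) (hij : i ≤ j) (hj : j ≤ n + 1) :
    Ox F i j ≤ sumOxBelow n F i j :=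
  Finset.single_le_sum (f := fun p => Ox F p.1 p.2) (fun _ _ => bot_le)
    (a := (i, j)) (Finset.mem_filter.2 ⟨mem_SegFinset.2 ⟨hi, hij, hj⟩, le_rfl, le_rfl⟩)

theorem sumOxBelow_le (hmono : SegMonotone n F) (hi : 1 ≤ i) (hij : i ≤ j) (hj : j ≤ n + 1) :
    sumOxBelow n F i j ≤ F i j :=
  Submodule.finset_sum_le fun p hp => by
    obtain ⟨hp, hpi, hpj⟩ := Finset.mem_filter.1 hp
    obtain ⟨hp1, hp12, hp2⟩ := mem_SegFinset.1 hp
    exact (Ox_le F p.1 p.2).trans (hmono _ _ _ _ hp1 hp12 hp2 hi hij hj hpi hpj)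

variable [FiniteDimensional ℝ V]

theorem le_sup_Ox_self (h : F (i - 1) i ≤ F i i) : F i i ≤ F (i - 1) i ⊔ Ox F i i :=
  (Submodule.sup_orthogonal_inf_of_hasOrthogonalProjection h).ge.trans
    (sup_le_sup_left orthogonal_inf_le_Ox_self _)

theorem le_sup_sup_Ox_of_ne (hij : i ≠ j) (hB : F i (j - 1) ≤ F i j) (hC : F (i - 1) j ≤ F i j) :
    F i j ≤ F i (j - 1) ⊔ F (i - 1) j ⊔ Ox F i j :=
  (Submodule.sup_orthogonal_inf_of_hasOrthogonalProjection (sup_le hB hC)).ge.trans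
    (sup_le_sup_left (orthogonal_inf_le_Ox_of_ne hij) _)

theorem le_sumOxBelow (hmono : SegMonotone n F) (hF0 : ∀ j, F 0 j = ⊥)
    (i j : ℕ) (hij : i ≤ j) (hj : j ≤ n + 1) : F i j ≤ sumOxBelow n F i j := by
  rcases Nat.eq_zero_or_pos i with rfl | hi
  · simp [hF0]
  have hC : F (i - 1) j ≤ sumOxBelow n F i j :=
    (le_sumOxBelow hmono hF0 (i - 1) j (by omega) hj).trans
      (sumOxBelow_mono (Nat.sub_le i 1) le_rfl)
  rcases hij.eq_or_lt with rfl | hlt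
  · calc F i i ≤ F (i - 1) i ⊔ Ox F i i := le_sup_Ox_self (hmono.pred_left_le hF0 hi le_rfl hj)
      _ ≤ sumOxBelow n F i i := sup_le hC (Ox_le_sumOxBelow hi le_rfl hj)
  · have hB : F i (j - 1) ≤ sumOxBelow n F i j :=
      (le_sumOxBelow hmono hF0 i (j - 1) (by omega) (by omega)).trans
        (sumOxBelow_mono le_rfl (Nat.sub_le j 1))
    calc F i j ≤ F i (j - 1) ⊔ F (i - 1) j ⊔ Ox F i j :=
          le_sup_sup_Ox_of_ne hlt.ne (hmono.pred_right_le hi hlt hj)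
            (hmono.pred_left_le hF0 hi hij hj)
      _ ≤ sumOxBelow n F i j := sup_le (sup_le hB hC) (Ox_le_sumOxBelow hi hij hj)
termination_by i + j

end

theorem timesOrthogonalInverse_monoidal_mobius_inverse_general
    {V : Type*} [NormedAddCommGroup V] [InnerProductSpace ℝ V] [FiniteDimensional ℝ V]
    (n : ℕ) (F : ℕ → ℕ → Submodule ℝ V)
    (hF0 : ∀ j : ℕ, F 0 j = ⊥)
    (hmono : ∀ i j k l : ℕ, 1 ≤ i → i ≤ j → j ≤ n + 1 → 1 ≤ k → k ≤ l → l ≤ n + 1 →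
      i ≤ k → j ≤ l → F i j ≤ F k l) :
    ∀ i j : ℕ, 1 ≤ i → i ≤ j → j ≤ n + 1 →
      ∑ p ∈ (SegFinset n).filter (fun p => p.1 ≤ i ∧ p.2 ≤ j), Ox F p.1 p.2 = F i j :=
  fun i j hi hij hj =>
    le_antisymm (sumOxBelow_le hmono hi hij hj) (le_sumOxBelow hmono hF0 i j hij hj)

/-- For an intersection-monotone function `F` on the segments of `{1 < ⋯ < n}`, the
×-Linear Orthogonal Inverse is a monoidal Möbius inverse of `F`:
`∑_{s' ≤ s} O_×(F)(s') = F(s)` for every segment `s`, the sum ranging over segments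
below `s` in the product order. -/
theorem timesOrthogonalInverse_monoidal_mobius_inverse
    {V : Type*} [NormedAddCommGroup V] [InnerProductSpace ℝ V] [FiniteDimensional ℝ V]
    (n : ℕ) (hn : 1 ≤ n) (F : ℕ → ℕ → Submodule ℝ V)
    (hF0 : ∀ j : ℕ, F 0 j = ⊥)
    (hmono : ∀ i j k l : ℕ, 1 ≤ i → i ≤ j → j ≤ n + 1 → 1 ≤ k → k ≤ l → l ≤ n + 1 →
      i ≤ k → j ≤ l → F i j ≤ F k l)
    (hint : ∀ i j : ℕ, 1 ≤ i → i < j → j ≤ n → F (i + 1) j ⊓ F i (j + 1) = F i j) :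
    ∀ i j : ℕ, 1 ≤ i → i ≤ j → j ≤ n + 1 →
      ∑ p ∈ (SegFinset n).filter (fun p => p.1 ≤ i ∧ p.2 ≤ j), Ox F p.1 p.2 = F i j :=
  timesOrthogonalInverse_monoidal_mobius_inverse_general n F hF0 hmono
end

section
/- Let n ≥ 1, let V be a finite-dimensional real inner product space, and let {0} = Z₀ ⊆ Z₁ ⊆ ⋯ ⊆ Z_n and {0} = B₀ ⊆ B₁ ⊆ ⋯ ⊆ B_n be increasing chains of subspaces of V. Define ZB(i,j) := Z_i ∩ B_j for 0 ≤ i ≤ j ≤ n and ZB(i, n+1) := Z_i, and define LK(i,j) := Z_i ⊖ (Z_i ∩ B_{j−1}) for 0 ≤ i < j ≤ n+1. Then for all 1 ≤ i < j ≤ n: (LK(i,j) ⊖ LK(i,j+1)) ⊖ (LK(i−1,j) ⊖ LK(i−1,j+1)) = (ZB(i,j) ⊖ ZB(i,j−1)) ⊖ (ZB(i−1,j) ⊖ ZB(i−1,j−1)); and for all 1 ≤ i ≤ n: LK(i,n+1) ⊖ LK(i−1,n+1) = (ZB(i,n+1) ⊖ ZB(i,n)) ⊖ (ZB(i−1,n+1)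 ⊖ ZB(i−1,n)). (This is the identity underlying the result that the ⊇-Linear Orthogonal Inverse of the persistent Laplacian kernels equals the ×-Linear Orthogonal Inverse of the birth-death spaces at every off-diagonal segment, since the kernel of the persistent Laplacian Δ^{K_i,K_{j−1}} equals Z_i ⊖ (Z_i ∩ B_{j−1}) with Z_i the cycle space of K_i and B_{j−1} the boundary space of K_{j−1}.) -/
/-- The birth-death spaces of the chains `Z` and `B`:
`ZB(i, j) := Z_i ∩ B_j` for `j ≤ n` and `ZB(i, n + 1) := Z_i`. -/
def ZBspace {V : Type*} [NormedAddCommGroup V] [InnerProductSpace ℝ V]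
    (n : ℕ) (Z B : ℕ → Submodule ℝ V) (i j : ℕ) : Submodule ℝ V :=
  if j = n + 1 then Z i else Z i ⊓ B j

/-- The persistent Laplacian kernels: `LK(i, j) := Z_i ⊖ (Z_i ∩ B_{j−1})`. -/
noncomputable def LKspace {V : Type*} [NormedAddCommGroup V] [InnerProductSpace ℝ V]
    (Z B : ℕ → Submodule ℝ V) (i j : ℕ) : Submodule ℝ V :=
  sdiffOrtho (Z i) (Z i ⊓ B (j - 1))

/-! The identity is pure lattice theory of orthogonal complements: for `Y ≤ W` with `Y`
admitting an orthogonal projection, `W = Y ⊔ (Yᗮ ⊓ W)`, so the modular law gives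
`W ⊓ (W ⊖ Y)ᗮ = Y` and hence `(W ⊖ X) ⊖ (W ⊖ Y) = Y ⊖ X`. Applied with `W = Z_k`,
`X = Z_k ∩ B_{j-1}` and `Y = Z_k ∩ B_j`, consecutive persistent Laplacian kernels differ by
exactly `ZB(k, j) ⊖ ZB(k, j - 1)`; at `j = n + 1` both sides unfold to the same space. -/

section Orthogonal

variable {V : Type*} [NormedAddCommGroup V] [InnerProductSpace ℝ V]

theorem Submodule.inf_orthogonal_inf_orthogonal_eq {W Y : Submodule ℝ V}
    [Y.HasOrthogonalProjection] (hYW : Y ≤ W) : W ⊓ (Yᗮ ⊓ W)ᗮ = Y := by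
  have hY : Y ≤ (Yᗮ ⊓ W)ᗮ :=
    Y.le_orthogonal_orthogonal.trans (Submodule.orthogonal_le inf_le_left)
  calc W ⊓ (Yᗮ ⊓ W)ᗮ
      = (Y ⊔ Yᗮ ⊓ W) ⊓ (Yᗮ ⊓ W)ᗮ := by
        rw [Submodule.sup_orthogonal_inf_of_hasOrthogonalProjection hYW]
    _ = Y ⊔ (Yᗮ ⊓ W) ⊓ (Yᗮ ⊓ W)ᗮ := sup_inf_assoc_of_le _ hY
    _ = Y := by rw [Submodule.inf_orthogonal_eq_bot, sup_bot_eq]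

theorem sdiffOrtho_sdiffOrtho_sdiffOrtho_of_le (W X : Submodule ℝ V) {Y : Submodule ℝ V}
    [Y.HasOrthogonalProjection] (hYW : Y ≤ W) :
    sdiffOrtho (sdiffOrtho W X) (sdiffOrtho W Y) = sdiffOrtho Y X := by
  unfold sdiffOrtho
  rw [inf_right_comm, inf_comm W Yᗮ, Submodule.inf_orthogonal_inf_orthogonal_eq hYW]

theorem sdiffOrtho_LKspace_LKspace_succ (Z B : ℕ → Submodule ℝ V) (k j : ℕ)
    [(Z k ⊓ B j).HasOrthogonalProjection] :
    sdiffOrtho (LKspace Z B k j) (LKspace Z B k (j + 1)) =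
      sdiffOrtho (Z k ⊓ B j) (Z k ⊓ B (j - 1)) :=
  sdiffOrtho_sdiffOrtho_sdiffOrtho_of_le (Y := Z k ⊓ B j) _ _ inf_le_left

theorem ZBspace_of_ne {n j : ℕ} (Z B : ℕ → Submodule ℝ V) (i : ℕ) (hj : j ≠ n + 1) :
    ZBspace n Z B i j = Z i ⊓ B j :=
  if_neg hj

theorem ZBspace_succ (n : ℕ) (Z B : ℕ → Submodule ℝ V) (i : ℕ) :
    ZBspace n Z B i (n + 1) = Z i :=
  if_pos rfl

end Orthogonal

theorem supOrthogonalInverse_LK_eq_timesOrthogonalInverse_ZB_general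
    {V : Type*} [NormedAddCommGroup V] [InnerProductSpace ℝ V] [FiniteDimensional ℝ V]
    (n : ℕ) (Z B : ℕ → Submodule ℝ V) :
    (∀ i j : ℕ, 1 ≤ i → i < j → j ≤ n →
      sdiffOrtho (sdiffOrtho (LKspace Z B i j) (LKspace Z B i (j + 1)))
          (sdiffOrtho (LKspace Z B (i - 1) j) (LKspace Z B (i - 1) (j + 1))) =
        sdiffOrtho (sdiffOrtho (ZBspace n Z B i j) (ZBspace n Z B i (j - 1)))
          (sdiffOrtho (ZBspace n Z B (i - 1) j) (ZBspace n Z B (i - 1) (j - 1)))) ∧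
    (∀ i : ℕ, 1 ≤ i → i ≤ n →
      sdiffOrtho (LKspace Z B i (n + 1)) (LKspace Z B (i - 1) (n + 1)) =
        sdiffOrtho (sdiffOrtho (ZBspace n Z B i (n + 1)) (ZBspace n Z B i n))
          (sdiffOrtho (ZBspace n Z B (i - 1) (n + 1)) (ZBspace n Z B (i - 1) n))) := by
  have hn_ne : n ≠ n + 1 := n.succ_ne_self.symm
  refine ⟨fun i j _ _ hjn => ?_, fun i _ _ => ?_⟩
  · rw [sdiffOrtho_LKspace_LKspace_succ, sdiffOrtho_LKspace_LKspace_succ,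
      ZBspace_of_ne Z B _ (by omega : j ≠ n + 1), ZBspace_of_ne Z B _ (by omega : j - 1 ≠ n + 1),
      ZBspace_of_ne Z B _ (by omega : j ≠ n + 1), ZBspace_of_ne Z B _ (by omega : j - 1 ≠ n + 1)]
  · rw [ZBspace_succ, ZBspace_succ, ZBspace_of_ne Z B _ hn_ne, ZBspace_of_ne Z B _ hn_ne]
    rfl

/-- The ⊇-Linear Orthogonal Inverse of the persistent Laplacian kernels equals the
×-Linear Orthogonal Inverse of the birth-death spaces at every off-diagonal segment. -/
theorem supOrthogonalInverse_LK_eq_timesOrthogonalInverse_ZB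
    {V : Type*} [NormedAddCommGroup V] [InnerProductSpace ℝ V] [FiniteDimensional ℝ V]
    (n : ℕ) (hn : 1 ≤ n) (Z B : ℕ → Submodule ℝ V)
    (hZ0 : Z 0 = ⊥) (hB0 : B 0 = ⊥)
    (hZ : ∀ i : ℕ, i < n → Z i ≤ Z (i + 1)) (hB : ∀ i : ℕ, i < n → B i ≤ B (i + 1)) :
    (∀ i j : ℕ, 1 ≤ i → i < j → j ≤ n →
      sdiffOrtho (sdiffOrtho (LKspace Z B i j) (LKspace Z B i (j + 1)))
          (sdiffOrtho (LKspace Z B (i - 1) j) (LKspace Z B (i - 1) (j + 1))) =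
        sdiffOrtho (sdiffOrtho (ZBspace n Z B i j) (ZBspace n Z B i (j - 1)))
          (sdiffOrtho (ZBspace n Z B (i - 1) j) (ZBspace n Z B (i - 1) (j - 1)))) ∧
    (∀ i : ℕ, 1 ≤ i → i ≤ n →
      sdiffOrtho (LKspace Z B i (n + 1)) (LKspace Z B (i - 1) (n + 1)) =
        sdiffOrtho (sdiffOrtho (ZBspace n Z B i (n + 1)) (ZBspace n Z B i n))
          (sdiffOrtho (ZBspace n Z B (i - 1) (n + 1)) (ZBspace n Z B (i - 1) n))) :=
  supOrthogonalInverse_LK_eq_timesOrthogonalInverse_ZB_general n Z B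
end
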